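/- arXiv:2110.01978 — 6 statements merged into one kernel-verified Lean document; each statement's English description precedes it below -/
import Mathlib

section
/- Let ω > 0 and α₃ ∈ ((√(1+4ω) - 1)/2, (√(48ω+9) - 3)/4). Define α₁ = -(√3·√(q(α₃)) + 2α₃ + 3)/4 and α₂ = (√3·√(q(α₃)) - 2α₃ - 3)/4 with q(α₃) = 16ω - 4α₃² - 4α₃ + 3. Then α₁ < 0 < α₂ < α₃. -/
/-- Ordering of the roots α₁ < 0 < α₂ < α₃ of the quartic, where α₁ and α₂ are
given explicitly in terms of α₃ and q(α₃) = 16ω - 4α₃² - 4α₃ + 3. -/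
theorem roots_order (ω α₃ : ℝ) (hω : 0 < ω)
    (hlb : (Real.sqrt (1 + 4 * ω) - 1) / 2 < α₃)
    (hub : α₃ < (Real.sqrt (48 * ω + 9) - 3) / 4)
    (α₁ α₂ : ℝ)
    (hα₁ : α₁ = -(Real.sqrt 3 * Real.sqrt (16 * ω - 4 * α₃ ^ 2 - 4 * α₃ + 3)
      + 2 * α₃ + 3) / 4)
    (hα₂ : α₂ = (Real.sqrt 3 * Real.sqrt (16 * ω - 4 * α₃ ^ 2 - 4 * α₃ + 3)
      - 2 * α₃ - 3) / 4) :
    α₁ < 0 ∧ 0 < α₂ ∧ α₂ < α₃ := by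
  set q : ℝ := 16 * ω - 4 * α₃ ^ 2 - 4 * α₃ + 3 with hq
  -- α₃ > 0
  have h1 : (1 : ℝ) < Real.sqrt (1 + 4 * ω) :=
    (Real.lt_sqrt (by norm_num)).mpr (by nlinarith)
  have h3 : 0 < α₃ := by linarith
  -- from lower bound: ω < α₃² + α₃
  have hlb' : Real.sqrt (1 + 4 * ω) < 2 * α₃ + 1 := by linarith
  have hA : 1 + 4 * ω < (2 * α₃ + 1) ^ 2 := by
    have h := Real.sq_sqrt (show (0:ℝ) ≤ 1 + 4 * ω by linarith)
    have h2 := Real.sqrt_nonneg (1 + 4 * ω)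
    nlinarith
  -- from upper bound: (4α₃+3)² < 48ω+9
  have hub' : (4 * α₃ + 3 : ℝ) < Real.sqrt (48 * ω + 9) := by linarith
  have hB : (4 * α₃ + 3) ^ 2 < 48 * ω + 9 := by
    have := (Real.lt_sqrt (x := 4 * α₃ + 3) (y := 48 * ω + 9) (by linarith)).mp hub'
    linarith
  have hqpos : 0 < q := by nlinarith
  set s : ℝ := Real.sqrt 3 * Real.sqrt q with hs
  have hs0 : 0 ≤ s := mul_nonneg (Real.sqrt_nonneg _) (Real.sqrt_nonneg _)
  have hs2 : s ^ 2 = 3 * q := by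
    rw [hs, mul_pow, Real.sq_sqrt (by norm_num : (3:ℝ) ≥ 0).le,
      Real.sq_sqrt hqpos.le]
  refine ⟨by rw [hα₁]; nlinarith, ?_, ?_⟩
  · -- s > 2α₃ + 3 since s² = 3q > (2α₃+3)²
    have : 2 * α₃ + 3 < s := by nlinarith
    rw [hα₂]; linarith
  · -- s < 6α₃ + 3 since s² = 3q < (6α₃+3)²
    have : s < 6 * α₃ + 3 := by nlinarith
    rw [hα₂]; linarith
end

section
/- Let ω > 0, α₃ ∈ ((√(1+4ω) - 1)/2, (√(48ω+9) - 3)/4), and α₁ = -(√3·√(q(α₃)) + 2α₃ + 3)/4, α₂ = (√3·√(q(α₃)) - 2α₃ - 3)/4 with q(α₃) = 16ω - 4α₃² - 4α₃ + 3. Then B = α₁α₂α₃/3 satisfies B < 0 and B = -α₃ω + α₃³/3 + α₃²/2. -/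
/-- The integration constant B = α₁α₂α₃/3 is negative and equals
-α₃ω + α₃³/3 + α₃²/2. -/
theorem B_neg_and_formula (ω α₃ : ℝ) (hω : 0 < ω)
    (hlb : (Real.sqrt (1 + 4 * ω) - 1) / 2 < α₃)
    (hub : α₃ < (Real.sqrt (48 * ω + 9) - 3) / 4)
    (α₁ α₂ B : ℝ)
    (hα₁ : α₁ = -(Real.sqrt 3 * Real.sqrt (16 * ω - 4 * α₃ ^ 2 - 4 * α₃ + 3)
      + 2 * α₃ + 3) / 4)
    (hα₂ : α₂ = (Real.sqrt 3 * Real.sqrt (16 * ω - 4 * α₃ ^ 2 - 4 * α₃ + 3)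
      - 2 * α₃ - 3) / 4)
    (hB : B = α₁ * α₂ * α₃ / 3) :
    B < 0 ∧ B = -α₃ * ω + α₃ ^ 3 / 3 + α₃ ^ 2 / 2 := by
  have hs1 : (Real.sqrt (1 + 4 * ω)) ^ 2 = 1 + 4 * ω := Real.sq_sqrt (by linarith)
  have hs1n : 0 ≤ Real.sqrt (1 + 4 * ω) := Real.sqrt_nonneg _
  have hα₃pos : 0 < α₃ := by nlinarith
  have hs2 : (Real.sqrt (48 * ω + 9)) ^ 2 = 48 * ω + 9 := Real.sq_sqrt (by linarith)
  have hsq : (4 * α₃ + 3) ^ 2 < 48 * ω + 9 := by nlinarith [Real.sqrt_nonneg (48 * ω + 9)]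
  have hqpos : 0 < 16 * ω - 4 * α₃ ^ 2 - 4 * α₃ + 3 := by nlinarith
  have key : (Real.sqrt 3 * Real.sqrt (16 * ω - 4 * α₃ ^ 2 - 4 * α₃ + 3)) ^ 2
      = 3 * (16 * ω - 4 * α₃ ^ 2 - 4 * α₃ + 3) := by
    rw [mul_pow, Real.sq_sqrt (by norm_num : (0:ℝ) ≤ 3), Real.sq_sqrt hqpos.le]
  have hprod : α₁ * α₂ = ((2 * α₃ + 3) ^ 2 - 3 * (16 * ω - 4 * α₃ ^ 2 - 4 * α₃ + 3)) / 16 := by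
    rw [hα₁, hα₂]
    linear_combination (-(1:ℝ)/16) * key
  constructor
  · have : α₁ * α₂ < 0 := by rw [hprod]; nlinarith
    rw [hB]
    have := mul_pos (neg_pos.mpr this) hα₃pos
    nlinarith
  · rw [hB, hprod]; ring
end

section
/- Let ω > 0 and α ∈ ((√(1+4ω) - 1)/2, (√(48ω+9) - 3)/4). With q(α) = 16ω - 4α² - 4α + 3 and r(α) = 6α³ + 9α² - 18ωα + 48ω² + 9ω, the inequality α·√(3q(α))·(16ω - 8α² - 6α + 3) < 2r(α) holds. -/
/-- The key estimate α·√(3q(α))·(16ω - 8α² - 6α + 3) < 2r(α) used in the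
monotonicity of the period map. -/
theorem key_estimate (ω α : ℝ) (hω : 0 < ω)
    (hlb : (Real.sqrt (1 + 4 * ω) - 1) / 2 < α)
    (hub : α < (Real.sqrt (48 * ω + 9) - 3) / 4) :
    α * Real.sqrt (3 * (16 * ω - 4 * α ^ 2 - 4 * α + 3)) *
      (16 * ω - 8 * α ^ 2 - 6 * α + 3)
    < 2 * (6 * α ^ 3 + 9 * α ^ 2 - 18 * ω * α + 48 * ω ^ 2 + 9 * ω) := by
  have h1sqrt : (1:ℝ) < Real.sqrt (1 + 4 * ω) := by
    exact (Real.lt_sqrt (by norm_num)).2 (by nlinarith)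
  have hα : 0 < α := by linarith
  have hlt : Real.sqrt (1 + 4 * ω) < 2 * α + 1 := by linarith
  have h1 : ω < α ^ 2 + α := by
    have := (Real.sqrt_lt' (by linarith : (0:ℝ) < 2 * α + 1)).1 hlt
    nlinarith
  have h2 : 2 * α ^ 2 + 3 * α < 6 * ω := by
    have h' : 4 * α + 3 < Real.sqrt (48 * ω + 9) := by linarith
    have := (Real.lt_sqrt (by linarith : (0:ℝ) ≤ 4 * α + 3)).1 h'
    nlinarith
  set S := Real.sqrt (3 * (16 * ω - 4 * α ^ 2 - 4 * α + 3)) with hSdef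
  have hS0 : 0 ≤ S := Real.sqrt_nonneg _
  have hS : S ≤ 3 * (2 * α + 1) := by
    rw [hSdef, show (3 : ℝ) * (2 * α + 1) = Real.sqrt ((3 * (2 * α + 1)) ^ 2) by
      rw [Real.sqrt_sq (by linarith)]]
    exact Real.sqrt_le_sqrt (by nlinarith)
  have hrpos : 0 < 6 * α ^ 3 + 9 * α ^ 2 - 18 * ω * α + 48 * ω ^ 2 + 9 * ω := by
    nlinarith [mul_pos hα hα, sq_nonneg (6 * ω - 2 * α ^ 2 - 3 * α),
      mul_pos hω hω, mul_pos hα hω,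
      mul_pos hα (mul_pos hα hα)]
  rcases le_or_gt (16 * ω - 8 * α ^ 2 - 6 * α + 3) 0 with hA | hA
  · have : α * S * (16 * ω - 8 * α ^ 2 - 6 * α + 3) ≤ 0 :=
      mul_nonpos_of_nonneg_of_nonpos (by positivity) hA
    linarith
  · have hstep : α * S * (16 * ω - 8 * α ^ 2 - 6 * α + 3)
        ≤ α * (3 * (2 * α + 1)) * (16 * ω - 8 * α ^ 2 - 6 * α + 3) := by
      have : α * S ≤ α * (3 * (2 * α + 1)) :=
        mul_le_mul_of_nonneg_left hS hα.le
      exact mul_le_mul_of_nonneg_right this hA.le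
    have hkey : α * (3 * (2 * α + 1)) * (16 * ω - 8 * α ^ 2 - 6 * α + 3)
        < 2 * (6 * α ^ 3 + 9 * α ^ 2 - 18 * ω * α + 48 * ω ^ 2 + 9 * ω) := by
      nlinarith [sq_nonneg (6 * ω - 2 * α ^ 2 - 3 * α), mul_pos hα hω,
        mul_pos hα hα, mul_pos hω hω,
        mul_pos hα (show (0:ℝ) < 6 * ω - 2 * α ^ 2 - 3 * α by linarith),
        mul_pos hω (show (0:ℝ) < 6 * ω - 2 * α ^ 2 - 3 * α by linarith)]
    linarith
end

section
/- For all k ∈ (0,1), d/dk [(K(k) - E(k))/K(k)] > 0, i.e., the function k ↦ 1 - E(k)/K(k) is strictly increasing on (0,1). -/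
open Real intervalIntegral MeasureTheory Metric

/-- The complete elliptic integral of the first kind. -/
noncomputable def ellipticK (k : ℝ) : ℝ :=
  ∫ θ in (0 : ℝ)..(Real.pi / 2), 1 / Real.sqrt (1 - k ^ 2 * Real.sin θ ^ 2)

/-- The complete elliptic integral of the second kind. -/
noncomputable def ellipticE (k : ℝ) : ℝ :=
  ∫ θ in (0 : ℝ)..(Real.pi / 2), Real.sqrt (1 - k ^ 2 * Real.sin θ ^ 2)

lemma one_sub_sq_sin_pos {x θ : ℝ} (hx : |x| < 1) : 0 < 1 - x ^ 2 * Real.sin θ ^ 2 := by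
  have h1 : Real.sin θ ^ 2 ≤ 1 := Real.sin_sq_le_one θ
  have h2 : x ^ 2 < 1 := by nlinarith [abs_nonneg x, sq_abs x]
  nlinarith [sq_nonneg x, sq_nonneg (Real.sin θ)]

lemma hasDerivAt_sqrt_aux {x s : ℝ} (h : 0 < 1 - x ^ 2 * s) :
    HasDerivAt (fun y : ℝ => Real.sqrt (1 - y ^ 2 * s))
      (-(x * s) / Real.sqrt (1 - x ^ 2 * s)) x := by
  have hu : HasDerivAt (fun y : ℝ => 1 - y ^ 2 * s) (-(2 * x * s)) x := by
    have h0 := ((hasDerivAt_pow 2 x).mul_const s).const_sub 1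
    rw [show (2:ℕ) - 1 = 1 from rfl, pow_one] at h0
    refine h0.congr_deriv ?_
    ring
  have h2 := hu.sqrt h.ne'
  convert h2 using 1
  ring

theorem ellipticK_pos {k : ℝ} (hk : |k| < 1) : 0 < ellipticK k := by
  have hc : Continuous fun θ : ℝ => 1 / Real.sqrt (1 - k ^ 2 * Real.sin θ ^ 2) := by
    apply Continuous.div continuous_const
    · exact (Real.continuous_sqrt.comp (by continuity))
    · intro θ
      exact (Real.sqrt_pos.mpr (one_sub_sq_sin_pos hk)).ne'
  refine intervalIntegral.intervalIntegral_pos_of_pos_on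
    (hc.intervalIntegrable _ _) (fun θ _ => ?_) (by positivity)
  exact div_pos one_pos (Real.sqrt_pos.mpr (one_sub_sq_sin_pos hk))

theorem ellipticE_pos {k : ℝ} (hk : |k| < 1) : 0 < ellipticE k := by
  have hc : Continuous fun θ : ℝ => Real.sqrt (1 - k ^ 2 * Real.sin θ ^ 2) :=
    Real.continuous_sqrt.comp (by continuity)
  refine intervalIntegral.intervalIntegral_pos_of_pos_on
    (hc.intervalIntegrable _ _) (fun θ _ => ?_) (by positivity)
  exact Real.sqrt_pos.mpr (one_sub_sq_sin_pos hk)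

set_option maxHeartbeats 2000000 in
theorem elliptic_derivs {k : ℝ} (hk : k ∈ Set.Ioo (0 : ℝ) 1) :
    ∃ K' E' : ℝ, HasDerivAt ellipticK K' k ∧ HasDerivAt ellipticE E' k ∧
      0 < K' ∧ E' < 0 := by
  obtain ⟨hk0, hk1⟩ := hk
  set ε := (1 - k) / 2 with hε
  have hεpos : 0 < ε := by simp only [hε]; linarith
  set a : ℝ := (1 + k) / 2 with ha
  have ha1 : a < 1 := by simp only [ha]; linarith
  have ha0 : 0 < a := by simp only [ha]; linarith
  set c : ℝ := 1 - a ^ 2 with hc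
  have hcpos : 0 < c := by
    have : a ^ 2 < 1 := by nlinarith
    simp only [hc]; linarith
  -- for x in the ball, 1 - x^2 sin^2 θ ≥ c
  have hball : ∀ x ∈ ball k ε, ∀ θ : ℝ, c ≤ 1 - x ^ 2 * Real.sin θ ^ 2 := by
    intro x hx θ
    have hxa : |x| < a := by
      have := mem_ball_iff_norm.mp hx
      rw [Real.norm_eq_abs] at this
      have : |x| ≤ |x - k| + |k| := by
        calc |x| = |(x - k) + k| := by ring_nf
        _ ≤ |x - k| + |k| := abs_add_le _ _
      rw [abs_of_pos hk0] at this
      have h2 := mem_ball_iff_norm.mp hx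
      rw [Real.norm_eq_abs] at h2
      calc |x| ≤ |x - k| + k := this
        _ < ε + k := by linarith
        _ = a := by simp only [hε, ha]; ring
    have hx2 : x ^ 2 < a ^ 2 := by nlinarith [abs_nonneg x, sq_abs x]
    have hs : Real.sin θ ^ 2 ≤ 1 := Real.sin_sq_le_one θ
    have hsn : 0 ≤ Real.sin θ ^ 2 := sq_nonneg _
    nlinarith [sq_nonneg x]
  have hkball : ∀ θ : ℝ, c ≤ 1 - k ^ 2 * Real.sin θ ^ 2 :=
    hball k (mem_ball_self hεpos)
  have hka : |k| < 1 := by rw [abs_of_pos hk0]; exact hk1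
  -- derivative of E
  have hE : HasDerivAt ellipticE
      (∫ θ in (0:ℝ)..(Real.pi/2),
        -(k * Real.sin θ ^ 2) / Real.sqrt (1 - k ^ 2 * Real.sin θ ^ 2)) k ∧
      IntervalIntegrable (fun θ =>
        -(k * Real.sin θ ^ 2) / Real.sqrt (1 - k ^ 2 * Real.sin θ ^ 2))
        volume 0 (Real.pi/2) := by
    have := intervalIntegral.hasDerivAt_integral_of_dominated_loc_of_deriv_le
      (F := fun x θ => Real.sqrt (1 - x ^ 2 * Real.sin θ ^ 2))
      (F' := fun x θ => -(x * Real.sin θ ^ 2) / Real.sqrt (1 - x ^ 2 * Real.sin θ ^ 2))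
      (x₀ := k) (a := (0:ℝ)) (b := Real.pi/2) (bound := fun _ => 1 / Real.sqrt c)
      (μ := volume) (ball_mem_nhds k hεpos)
      (Filter.Eventually.of_forall fun x =>
        ((Real.continuous_sqrt.comp (by continuity)).aestronglyMeasurable))
      ((Real.continuous_sqrt.comp (by continuity)).intervalIntegrable _ _)
      (by
        apply Continuous.aestronglyMeasurable
        apply Continuous.div (by continuity)
          (Real.continuous_sqrt.comp (by continuity))
        intro θ
        exact (Real.sqrt_pos.mpr (one_sub_sq_sin_pos hka)).ne')
      (Filter.Eventually.of_forall fun θ _ x hx => by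
        have hcθ := hball x hx θ
        have hu : 0 < 1 - x ^ 2 * Real.sin θ ^ 2 := lt_of_lt_of_le hcpos hcθ
        rw [norm_div, Real.norm_eq_abs, Real.norm_eq_abs,
          abs_of_pos (Real.sqrt_pos.mpr hu)]
        apply div_le_div₀ (by positivity)
        · rw [abs_neg, abs_mul]
          have hxa : |x| ≤ 1 := by
            by_contra h
            push_neg at h
            have := hball x hx (Real.pi/2)
            simp [Real.sin_pi_div_two] at this
            nlinarith [sq_abs x]
          have : |Real.sin θ ^ 2| ≤ 1 := by
            rw [abs_of_nonneg (sq_nonneg _)]; exact Real.sin_sq_le_one θ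
          nlinarith [abs_nonneg x, abs_nonneg (Real.sin θ ^ 2)]
        · exact Real.sqrt_pos.mpr hcpos
        · exact Real.sqrt_le_sqrt hcθ)
      ((continuous_const).intervalIntegrable _ _)
      (Filter.Eventually.of_forall fun θ _ x hx =>
        hasDerivAt_sqrt_aux (lt_of_lt_of_le hcpos (hball x hx θ)))
    exact ⟨this.2, this.1⟩
  -- derivative of K
  have hKd : HasDerivAt ellipticK
      (∫ θ in (0:ℝ)..(Real.pi/2),
        k * Real.sin θ ^ 2 /
          ((1 - k ^ 2 * Real.sin θ ^ 2) * Real.sqrt (1 - k ^ 2 * Real.sin θ ^ 2))) k ∧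
      IntervalIntegrable (fun θ =>
        k * Real.sin θ ^ 2 /
          ((1 - k ^ 2 * Real.sin θ ^ 2) * Real.sqrt (1 - k ^ 2 * Real.sin θ ^ 2)))
        volume 0 (Real.pi/2) := by
    have key : ∀ x : ℝ, (∀ θ : ℝ, c ≤ 1 - x ^ 2 * Real.sin θ ^ 2) → ∀ θ : ℝ,
        HasDerivAt (fun y : ℝ => 1 / Real.sqrt (1 - y ^ 2 * Real.sin θ ^ 2))
          (x * Real.sin θ ^ 2 /
            ((1 - x ^ 2 * Real.sin θ ^ 2) * Real.sqrt (1 - x ^ 2 * Real.sin θ ^ 2))) x := by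
      intro x hx θ
      have hu : 0 < 1 - x ^ 2 * Real.sin θ ^ 2 := lt_of_lt_of_le hcpos (hx θ)
      have hs := Real.sqrt_pos.mpr hu
      have hg := hasDerivAt_sqrt_aux (s := Real.sin θ ^ 2) hu
      have := (hasDerivAt_const x (1:ℝ)).div hg hs.ne'
      refine HasDerivAt.congr_deriv this ?_
      rw [Real.sq_sqrt hu.le]
      rw [div_eq_div_iff (by positivity) (by positivity)]
      field_simp
      ring
    have := intervalIntegral.hasDerivAt_integral_of_dominated_loc_of_deriv_le
      (F := fun x θ => 1 / Real.sqrt (1 - x ^ 2 * Real.sin θ ^ 2))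
      (F' := fun x θ => x * Real.sin θ ^ 2 /
        ((1 - x ^ 2 * Real.sin θ ^ 2) * Real.sqrt (1 - x ^ 2 * Real.sin θ ^ 2)))
      (x₀ := k) (a := (0:ℝ)) (b := Real.pi/2) (bound := fun _ => 1 / (c * Real.sqrt c))
      (μ := volume) (ball_mem_nhds k hεpos)
      (by
        filter_upwards [ball_mem_nhds k hεpos] with x hx
        apply Continuous.aestronglyMeasurable
        apply Continuous.div continuous_const (Real.continuous_sqrt.comp (by continuity))
        intro θ
        exact (Real.sqrt_pos.mpr (lt_of_lt_of_le hcpos (hball x hx θ))).ne')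
      (by
        apply Continuous.intervalIntegrable
        apply Continuous.div continuous_const (Real.continuous_sqrt.comp (by continuity))
        intro θ
        exact (Real.sqrt_pos.mpr (one_sub_sq_sin_pos hka)).ne')
      (by
        apply Continuous.aestronglyMeasurable
        apply Continuous.div (by continuity)
        · exact ((by continuity : Continuous fun θ : ℝ => 1 - k ^ 2 * Real.sin θ ^ 2).mul
            (Real.continuous_sqrt.comp (by continuity)))
        · intro θ
          have hu := one_sub_sq_sin_pos (x := k) (θ := θ) hka
          positivity)
      (Filter.Eventually.of_forall fun θ _ x hx => by
        have hcθ := hball x hx θ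
        have hu : 0 < 1 - x ^ 2 * Real.sin θ ^ 2 := lt_of_lt_of_le hcpos hcθ
        have hs := Real.sqrt_pos.mpr hu
        rw [norm_div, Real.norm_eq_abs, Real.norm_eq_abs,
          abs_of_pos (by positivity : (0:ℝ) < (1 - x ^ 2 * Real.sin θ ^ 2) *
            Real.sqrt (1 - x ^ 2 * Real.sin θ ^ 2))]
        apply div_le_div₀ (by positivity)
        · rw [abs_mul]
          have hxa : |x| ≤ 1 := by
            by_contra h
            push_neg at h
            have := hball x hx (Real.pi/2)
            simp [Real.sin_pi_div_two] at this
            nlinarith [sq_abs x]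
          have : |Real.sin θ ^ 2| ≤ 1 := by
            rw [abs_of_nonneg (sq_nonneg _)]; exact Real.sin_sq_le_one θ
          nlinarith [abs_nonneg x, abs_nonneg (Real.sin θ ^ 2)]
        · positivity
        · have h1 : Real.sqrt c ≤ Real.sqrt (1 - x ^ 2 * Real.sin θ ^ 2) :=
            Real.sqrt_le_sqrt hcθ
          have h2 : 0 ≤ Real.sqrt c := Real.sqrt_nonneg _
          nlinarith)
      ((continuous_const).intervalIntegrable _ _)
      (Filter.Eventually.of_forall fun θ _ x hx =>
        key x (fun θ' => hball x hx θ') θ)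
    exact ⟨this.2, this.1⟩
  refine ⟨_, _, hKd.1, hE.1, ?_, ?_⟩
  · refine intervalIntegral.intervalIntegral_pos_of_pos_on hKd.2 (fun θ hθ => ?_) (by positivity)
    have hsθ : 0 < Real.sin θ := Real.sin_pos_of_pos_of_lt_pi hθ.1
      (lt_trans hθ.2 (by linarith [Real.pi_pos]))
    have hu : 0 < 1 - k ^ 2 * Real.sin θ ^ 2 := one_sub_sq_sin_pos hka
    positivity
  · have : (0:ℝ) < ∫ θ in (0:ℝ)..(Real.pi/2),
        k * Real.sin θ ^ 2 / Real.sqrt (1 - k ^ 2 * Real.sin θ ^ 2) := by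
      refine intervalIntegral.intervalIntegral_pos_of_pos_on ?_ (fun θ hθ => ?_) (by positivity)
      · convert hE.2.neg using 1
        funext θ
        simp [neg_div]
      · have hsθ : 0 < Real.sin θ := Real.sin_pos_of_pos_of_lt_pi hθ.1
          (lt_trans hθ.2 (by linarith [Real.pi_pos]))
        have hu : 0 < 1 - k ^ 2 * Real.sin θ ^ 2 := one_sub_sq_sin_pos hka
        positivity
    have heq : (∫ θ in (0:ℝ)..(Real.pi/2),
        -(k * Real.sin θ ^ 2) / Real.sqrt (1 - k ^ 2 * Real.sin θ ^ 2)) =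
        -(∫ θ in (0:ℝ)..(Real.pi/2),
          k * Real.sin θ ^ 2 / Real.sqrt (1 - k ^ 2 * Real.sin θ ^ 2)) := by
      rw [← intervalIntegral.integral_neg]
      congr 1; funext θ; ring
    rw [heq]
    linarith

/-- For k ∈ (0,1), d/dk [(K(k) - E(k))/K(k)] > 0; equivalently
k ↦ 1 - E(k)/K(k) is strictly increasing on (0,1). -/
theorem deriv_ratio_pos (k : ℝ) (hk : k ∈ Set.Ioo (0 : ℝ) 1) :
    deriv (fun k => (ellipticK k - ellipticE k) / ellipticK k) k > 0 ∧
    StrictMonoOn (fun k => 1 - ellipticE k / ellipticK k) (Set.Ioo (0 : ℝ) 1) := by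
  have main : ∀ x ∈ Set.Ioo (0:ℝ) 1,
      0 < deriv (fun k => (ellipticK k - ellipticE k) / ellipticK k) x ∧
      ∃ d, 0 < d ∧ HasDerivAt (fun k => 1 - ellipticE k / ellipticK k) d x := by
    intro x hx
    obtain ⟨K', E', hK', hE', hK'pos, hE'neg⟩ := elliptic_derivs hx
    have hxa : |x| < 1 := by rw [abs_of_pos hx.1]; exact hx.2
    have hKpos := ellipticK_pos hxa
    have hEpos := ellipticE_pos hxa
    have hnum : 0 < ellipticE x * K' - E' * ellipticK x := by nlinarith
    constructor
    · have h1 : HasDerivAt (fun k => (ellipticK k - ellipticE k) / ellipticK k)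
          (((K' - E') * ellipticK x - (ellipticK x - ellipticE x) * K') / ellipticK x ^ 2) x :=
        (hK'.sub hE').div hK' hKpos.ne'
      rw [h1.deriv]
      have : ((K' - E') * ellipticK x - (ellipticK x - ellipticE x) * K') =
          ellipticE x * K' - E' * ellipticK x := by ring
      rw [this]
      positivity
    · refine ⟨(ellipticE x * K' - E' * ellipticK x) / ellipticK x ^ 2, by positivity, ?_⟩
      have h2 : HasDerivAt (fun k => 1 - ellipticE k / ellipticK k)
          ((0:ℝ) - (E' * ellipticK x - ellipticE x * K') / ellipticK x ^ 2) x :=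
        (hasDerivAt_const x (1:ℝ)).sub (hE'.div hK' hKpos.ne')
      convert h2 using 1
      ring
  refine ⟨(main k hk).1, ?_⟩
  apply strictMonoOn_of_deriv_pos (convex_Ioo 0 1)
  · intro x hx
    obtain ⟨-, d, -, hd⟩ := main x hx
    exact hd.continuousAt.continuousWithinAt
  · intro x hx
    rw [interior_Ioo] at hx
    obtain ⟨-, d, hdpos, hd⟩ := main x hx
    rw [hd.deriv]
    exact hdpos
end

section
/- Suppose φ is a smooth L-periodic solution of -φ'' + ωφ - φ³ - φ⁵ = 0 depending smoothly on ω, with derivative η = dφ/dω. Then ∫₀^L φ² dx = (1/2)·d/dω ∫₀^L φ⁴ dx + (2/3)·d/dω ∫₀^L φ⁶ dx. -/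
open intervalIntegral

/-- Differentiation under the interval integral for nice integrands. -/
lemma hasDerivAt_intervalIntegral_param {a b : ℝ} {G G' : ℝ → ℝ → ℝ}
    (hG : Continuous (Function.uncurry G)) (hG' : Continuous (Function.uncurry G'))
    (hd : ∀ ω x, HasDerivAt (fun ω' => G ω' x) (G' ω x) ω) (ω₀ : ℝ) :
    HasDerivAt (fun ω => ∫ x in a..b, G ω x) (∫ x in a..b, G' ω₀ x) ω₀ := by
  obtain ⟨C, hC⟩ :=
    ((isCompact_closedBall ω₀ 1).prod isCompact_uIcc).exists_bound_of_continuousOn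
      hG'.continuousOn
  have hGsl : ∀ ω : ℝ, Continuous (G ω) := fun ω =>
    hG.comp (continuous_const.prodMk continuous_id)
  have hGsl' : ∀ ω : ℝ, Continuous (G' ω) := fun ω =>
    hG'.comp (continuous_const.prodMk continuous_id)
  refine (intervalIntegral.hasDerivAt_integral_of_dominated_loc_of_deriv_le
    (F := G) (F' := G') (bound := fun _ => C) (Metric.ball_mem_nhds ω₀ one_pos)
    (Filter.Eventually.of_forall fun ω => (hGsl ω).aestronglyMeasurable)
    ((hGsl ω₀).intervalIntegrable a b)
    ((hGsl' ω₀).aestronglyMeasurable)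
    ?_ (intervalIntegrable_const) ?_).2
  · refine Filter.Eventually.of_forall fun t ht x hx => ?_
    exact hC (x, t) ⟨Metric.ball_subset_closedBall hx, Set.uIoc_subset_uIcc ht⟩
  · exact Filter.Eventually.of_forall fun t ht x hx => hd x t

/-- For a smooth family φ(ω, ·) of L-periodic solutions of
-φ'' + ωφ - φ³ - φ⁵ = 0, one has
∫₀^L φ² = (1/2) d/dω ∫₀^L φ⁴ + (2/3) d/dω ∫₀^L φ⁶. -/
theorem integral_identity_domega (L : ℝ) (hL : 0 < L) (φ : ℝ → ℝ → ℝ)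
    (hφ : ContDiff ℝ (⊤ : ℕ∞) (Function.uncurry φ))
    (hper : ∀ ω x, φ ω (x + L) = φ ω x)
    (hode : ∀ ω x,
      -(deriv (deriv (φ ω)) x) + ω * φ ω x - (φ ω x) ^ 3 - (φ ω x) ^ 5 = 0)
    (ω₀ : ℝ) :
    (∫ x in (0 : ℝ)..L, (φ ω₀ x) ^ 2) =
      (1 / 2) * deriv (fun ω => ∫ x in (0 : ℝ)..L, (φ ω x) ^ 4) ω₀ +
      (2 / 3) * deriv (fun ω => ∫ x in (0 : ℝ)..L, (φ ω x) ^ 6) ω₀ := by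
  set F := Function.uncurry φ with hF
  set G : ℝ × ℝ → (ℝ × ℝ) →L[ℝ] ℝ := fun p => fderiv ℝ F p with hGdef
  set η : ℝ → ℝ → ℝ := fun ω x => G (ω, x) ((1 : ℝ), (0 : ℝ)) with hηdef
  set ψ : ℝ → ℝ → ℝ := fun ω x => G (ω, x) ((0 : ℝ), (1 : ℝ)) with hψdef
  set ζ : ℝ → ℝ → ℝ := fun ω x => fderiv ℝ G (ω, x) ((1 : ℝ), (0 : ℝ)) ((0 : ℝ), (1 : ℝ))
    with hζdef
  set ξ : ℝ → ℝ → ℝ := fun ω x => fderiv ℝ G (ω, x) ((0 : ℝ), (1 : ℝ)) ((0 : ℝ), (1 : ℝ))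
    with hξdef
  have hGsm : ContDiff ℝ (⊤ : ℕ∞) G := hφ.fderiv_right (by simp)
  have hFd : ∀ p : ℝ × ℝ, HasFDerivAt F (G p) p := fun p =>
    (hφ.differentiable (by simp) p).hasFDerivAt
  have hGd : ∀ p : ℝ × ℝ, HasFDerivAt G (fderiv ℝ G p) p := fun p =>
    (hGsm.differentiable (by simp) p).hasFDerivAt
  -- curves
  have hc1 : ∀ (ω x : ℝ), HasDerivAt (fun ω' : ℝ => (ω', x)) (((1 : ℝ), (0 : ℝ))) ω :=
    fun ω x => (hasDerivAt_id ω).prodMk (hasDerivAt_const ω x)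
  have hc2 : ∀ (ω x : ℝ), HasDerivAt (fun y : ℝ => (ω, y)) (((0 : ℝ), (1 : ℝ))) x :=
    fun ω x => (hasDerivAt_const x ω).prodMk (hasDerivAt_id x)
  -- first partials
  have hη : ∀ ω x, HasDerivAt (fun ω' => φ ω' x) (η ω x) ω := fun ω x =>
    (hFd (ω, x)).comp_hasDerivAt (f := fun ω' : ℝ => (ω', x)) ω (hc1 ω x)
  have hψ : ∀ ω x, HasDerivAt (φ ω) (ψ ω x) x := fun ω x =>
    (hFd (ω, x)).comp_hasDerivAt x (hc2 ω x)
  -- second partials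
  have hGω : ∀ ω x, HasDerivAt (fun ω' => G (ω', x)) (fderiv ℝ G (ω, x) ((1:ℝ),(0:ℝ))) ω :=
    fun ω x => (hGd (ω, x)).comp_hasDerivAt ω (hc1 ω x)
  have hGx : ∀ ω x, HasDerivAt (fun y => G (ω, y)) (fderiv ℝ G (ω, x) ((0:ℝ),(1:ℝ))) x :=
    fun ω x => (hGd (ω, x)).comp_hasDerivAt x (hc2 ω x)
  have hζψ : ∀ ω x, HasDerivAt (fun ω' => ψ ω' x) (ζ ω x) ω := by
    intro ω x
    have := (hGω ω x).clm_apply (hasDerivAt_const ω (((0:ℝ),(1:ℝ))))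
    simpa using this
  have hξψ : ∀ ω x, HasDerivAt (fun y => ψ ω y) (ξ ω x) x := by
    intro ω x
    have := (hGx ω x).clm_apply (hasDerivAt_const x (((0:ℝ),(1:ℝ))))
    simpa using this
  have hsymm : ∀ ω x, fderiv ℝ G (ω, x) ((0:ℝ),(1:ℝ)) ((1:ℝ),(0:ℝ)) = ζ ω x := fun ω x =>
    second_derivative_symmetric hFd (hGd (ω, x)) _ _
  have hζη : ∀ ω x, HasDerivAt (fun y => η ω y) (ζ ω x) x := by
    intro ω x
    have := (hGx ω x).clm_apply (hasDerivAt_const x (((1:ℝ),(0:ℝ))))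
    rw [← hsymm ω x]
    simpa using this
  -- continuity
  have cηu : Continuous (Function.uncurry η) := (hGsm.clm_apply contDiff_const).continuous
  have cψu : Continuous (Function.uncurry ψ) := (hGsm.clm_apply contDiff_const).continuous
  have hG2 : ContDiff ℝ (⊤ : ℕ∞) (fderiv ℝ G) := hGsm.fderiv_right (by simp)
  have cζu : Continuous (Function.uncurry ζ) :=
    ((hG2.clm_apply contDiff_const).clm_apply contDiff_const).continuous
  have cξu : Continuous (Function.uncurry ξ) :=
    ((hG2.clm_apply contDiff_const).clm_apply contDiff_const).continuous
  have cφu : Continuous (Function.uncurry φ) := hφ.continuous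
  have slice : ∀ {f : ℝ → ℝ → ℝ}, Continuous (Function.uncurry f) → ∀ ω, Continuous (f ω) :=
    fun hf ω => hf.comp (continuous_const.prodMk continuous_id)
  -- ODE: ξ ω x = ω φ - φ³ - φ⁵
  have hξeq : ∀ ω x, ξ ω x = ω * φ ω x - (φ ω x) ^ 3 - (φ ω x) ^ 5 := by
    intro ω x
    have h1 : deriv (φ ω) = fun y => ψ ω y := funext fun y => (hψ ω y).deriv
    have h2 : deriv (deriv (φ ω)) x = ξ ω x := by rw [h1]; exact (hξψ ω x).deriv
    have := hode ω x
    rw [h2] at this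
    linarith
  -- periodicity facts
  have pφ : ∀ ω, φ ω L = φ ω 0 := fun ω => by simpa using hper ω 0
  have pη : ∀ ω, η ω L = η ω 0 := by
    intro ω
    have h1 : (fun ω' => φ ω' L) = fun ω' => φ ω' 0 := funext fun ω' => by simpa using hper ω' 0
    have h2 := hη ω L
    rw [h1] at h2
    exact h2.unique (hη ω 0)
  have pψ : ∀ ω, ψ ω L = ψ ω 0 := by
    intro ω
    have h1 : HasDerivAt (fun y => φ ω (y + L)) (ψ ω (0 + L) * 1) 0 :=
      (hψ ω (0 + L)).comp 0 ((hasDerivAt_id 0).add_const L)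
    have h2 : (fun y => φ ω (y + L)) = φ ω := funext fun y => hper ω y
    rw [h2] at h1
    have := h1.unique (hψ ω 0)
    simpa using this
  -- integrability of slices
  have intg : ∀ (f : ℝ → ℝ), Continuous f → IntervalIntegrable f MeasureTheory.volume 0 L :=
    fun f hf => hf.intervalIntegrable 0 L
  -- Integration by parts, part 1 : ∫ φ ξ = -∫ ψ²  (at every ω)
  have parts1 : ∀ ω, (∫ x in (0:ℝ)..L, φ ω x * ξ ω x) = - ∫ x in (0:ℝ)..L, ψ ω x ^ 2 := by
    intro ω
    have h := intervalIntegral.integral_mul_deriv_eq_deriv_mul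
      (u := φ ω) (u' := ψ ω) (v := ψ ω) (v' := ξ ω)
      (fun x _ => hψ ω x) (fun x _ => hξψ ω x)
      (intg _ (slice cψu ω)) (intg _ (slice cξu ω))
    rw [pφ ω, pψ ω] at h
    have h2 : (∫ x in (0:ℝ)..L, ψ ω x * ψ ω x) = ∫ x in (0:ℝ)..L, ψ ω x ^ 2 := by
      refine intervalIntegral.integral_congr fun x _ => by ring
    rw [h2] at h
    linarith [h]
  -- E(ω) = ∫ (ψ² + ω φ² - φ⁴ - φ⁶) = 0 for all ω
  have hE0 : ∀ ω, (∫ x in (0:ℝ)..L,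
      (ψ ω x ^ 2 + ω * φ ω x ^ 2 - φ ω x ^ 4 - φ ω x ^ 6)) = 0 := by
    intro ω
    have h1 : ∀ x, ψ ω x ^ 2 + ω * φ ω x ^ 2 - φ ω x ^ 4 - φ ω x ^ 6
        = ψ ω x ^ 2 + φ ω x * ξ ω x := by
      intro x; rw [hξeq ω x]; ring
    rw [intervalIntegral.integral_congr (fun x _ => h1 x),
      intervalIntegral.integral_add (intg _ ((slice cψu ω).fun_pow 2))
        (intg _ ((slice cφu ω).fun_mul (slice cξu ω))), parts1 ω]
    ring
  -- Integration by parts, part 2 : ∫ ψ ζ = -∫ ξ η at ω₀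
  have parts2 : (∫ x in (0:ℝ)..L, ψ ω₀ x * ζ ω₀ x) = - ∫ x in (0:ℝ)..L, ξ ω₀ x * η ω₀ x := by
    have h := intervalIntegral.integral_mul_deriv_eq_deriv_mul
      (u := ψ ω₀) (u' := ξ ω₀) (v := η ω₀) (v' := ζ ω₀)
      (fun x _ => hξψ ω₀ x) (fun x _ => hζη ω₀ x)
      (intg _ (slice cξu ω₀)) (intg _ (slice cζu ω₀))
    rw [pψ ω₀, pη ω₀] at h
    linarith [h]
  -- derivative of E at ω₀ is 0, computed by differentiation under the integral
  have hEderiv : HasDerivAt (fun ω => ∫ x in (0:ℝ)..L,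
      (ψ ω x ^ 2 + ω * φ ω x ^ 2 - φ ω x ^ 4 - φ ω x ^ 6))
      (∫ x in (0:ℝ)..L, (2 * ψ ω₀ x * ζ ω₀ x + φ ω₀ x ^ 2 + ω₀ * (2 * φ ω₀ x * η ω₀ x)
        - 4 * φ ω₀ x ^ 3 * η ω₀ x - 6 * φ ω₀ x ^ 5 * η ω₀ x)) ω₀ := by
    refine hasDerivAt_intervalIntegral_param (a := 0) (b := L)
      (G := fun ω x => ψ ω x ^ 2 + ω * φ ω x ^ 2 - φ ω x ^ 4 - φ ω x ^ 6)
      (G' := fun ω x => 2 * ψ ω x * ζ ω x + φ ω x ^ 2 + ω * (2 * φ ω x * η ω x)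
        - 4 * φ ω x ^ 3 * η ω x - 6 * φ ω x ^ 5 * η ω x) ?_ ?_ ?_ ω₀
    · exact ((cψu.pow 2).add ((continuous_fst).mul (cφu.pow 2))).sub (cφu.pow 4)
        |>.sub (cφu.pow 6)
    · refine Continuous.sub (Continuous.sub (Continuous.add (Continuous.add ?_ ?_) ?_) ?_) ?_
      · exact (continuous_const.mul cψu).mul cζu
      · exact cφu.pow 2
      · exact continuous_fst.mul ((continuous_const.mul cφu).mul cηu)
      · exact ((continuous_const.mul (cφu.pow 3))).mul cηu
      · exact ((continuous_const.mul (cφu.pow 5))).mul cηu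
    · intro ω x
      have d1 : HasDerivAt (fun ω' => ψ ω' x ^ 2) (2 * ψ ω x * ζ ω x) ω := by
        simpa using ((hζψ ω x).fun_pow 2)
      have d2 : HasDerivAt (fun ω' => ω' * φ ω' x ^ 2)
          (1 * φ ω x ^ 2 + ω * (2 * φ ω x * η ω x)) ω := by
        have := (hasDerivAt_id ω).fun_mul (((hη ω x).fun_pow 2))
        simpa using this
      have d3 : HasDerivAt (fun ω' => φ ω' x ^ 4) (4 * φ ω x ^ 3 * η ω x) ω := by
        simpa using ((hη ω x).fun_pow 4)
      have d4 : HasDerivAt (fun ω' => φ ω' x ^ 6) (6 * φ ω x ^ 5 * η ω x) ω := by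
        simpa using ((hη ω x).fun_pow 6)
      have := ((d1.fun_add d2).fun_sub d3).fun_sub d4
      refine this.congr_deriv ?_
      ring
  have hEzero : (∫ x in (0:ℝ)..L, (2 * ψ ω₀ x * ζ ω₀ x + φ ω₀ x ^ 2
      + ω₀ * (2 * φ ω₀ x * η ω₀ x)
      - 4 * φ ω₀ x ^ 3 * η ω₀ x - 6 * φ ω₀ x ^ 5 * η ω₀ x)) = 0 := by
    have hfun : (fun ω => ∫ x in (0:ℝ)..L,
        (ψ ω x ^ 2 + ω * φ ω x ^ 2 - φ ω x ^ 4 - φ ω x ^ 6)) = fun _ => (0:ℝ) :=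
      funext hE0
    have := hEderiv
    rw [hfun] at this
    exact this.unique (hasDerivAt_const ω₀ 0)
  -- split the big integral
  have i1 := intg (fun x => 2 * ψ ω₀ x * ζ ω₀ x) ((continuous_const.mul (slice cψu ω₀)).mul (slice cζu ω₀))
  have i2 := intg (fun x => φ ω₀ x ^ 2) ((slice cφu ω₀).pow 2)
  have i3 := intg (fun x => ω₀ * (2 * φ ω₀ x * η ω₀ x)) (continuous_const.mul ((continuous_const.mul (slice cφu ω₀)).mul
    (slice cηu ω₀)))
  have i4 := intg (fun x => 4 * φ ω₀ x ^ 3 * η ω₀ x) ((continuous_const.mul ((slice cφu ω₀).pow 3)).mul (slice cηu ω₀))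
  have i5 := intg (fun x => 6 * φ ω₀ x ^ 5 * η ω₀ x) ((continuous_const.mul ((slice cφu ω₀).pow 5)).mul (slice cηu ω₀))
  rw [intervalIntegral.integral_sub (((i1.add i2).add i3).sub i4) i5,
    intervalIntegral.integral_sub ((i1.add i2).add i3) i4,
    intervalIntegral.integral_add (i1.add i2) i3,
    intervalIntegral.integral_add i1 i2] at hEzero
  -- rewrite pieces
  have e1 : (∫ x in (0:ℝ)..L, 2 * ψ ω₀ x * ζ ω₀ x)
      = 2 * ∫ x in (0:ℝ)..L, ψ ω₀ x * ζ ω₀ x := by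
    rw [← intervalIntegral.integral_const_mul]
    exact intervalIntegral.integral_congr fun x _ => by ring
  have e3 : (∫ x in (0:ℝ)..L, ω₀ * (2 * φ ω₀ x * η ω₀ x))
      = 2 * ω₀ * ∫ x in (0:ℝ)..L, φ ω₀ x * η ω₀ x := by
    rw [← intervalIntegral.integral_const_mul]
    exact intervalIntegral.integral_congr fun x _ => by ring
  have e4 : (∫ x in (0:ℝ)..L, 4 * φ ω₀ x ^ 3 * η ω₀ x)
      = 4 * ∫ x in (0:ℝ)..L, φ ω₀ x ^ 3 * η ω₀ x := by
    rw [← intervalIntegral.integral_const_mul]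
    exact intervalIntegral.integral_congr fun x _ => by ring
  have e5 : (∫ x in (0:ℝ)..L, 6 * φ ω₀ x ^ 5 * η ω₀ x)
      = 6 * ∫ x in (0:ℝ)..L, φ ω₀ x ^ 5 * η ω₀ x := by
    rw [← intervalIntegral.integral_const_mul]
    exact intervalIntegral.integral_congr fun x _ => by ring
  have eξ : (∫ x in (0:ℝ)..L, ξ ω₀ x * η ω₀ x)
      = ω₀ * (∫ x in (0:ℝ)..L, φ ω₀ x * η ω₀ x)
        - (∫ x in (0:ℝ)..L, φ ω₀ x ^ 3 * η ω₀ x)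
        - (∫ x in (0:ℝ)..L, φ ω₀ x ^ 5 * η ω₀ x) := by
    have h1 : (∫ x in (0:ℝ)..L, ξ ω₀ x * η ω₀ x)
        = ∫ x in (0:ℝ)..L, (ω₀ * (φ ω₀ x * η ω₀ x) - φ ω₀ x ^ 3 * η ω₀ x
          - φ ω₀ x ^ 5 * η ω₀ x) := by
      refine intervalIntegral.integral_congr fun x _ => ?_
      rw [hξeq ω₀ x]; ring
    rw [h1, intervalIntegral.integral_sub
        (IntervalIntegrable.sub (intg _ (continuous_const.fun_mul ((slice cφu ω₀).fun_mul
          (slice cηu ω₀)))) (intg _ (((slice cφu ω₀).fun_pow 3).fun_mul (slice cηu ω₀))))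
        (intg _ (((slice cφu ω₀).fun_pow 5).fun_mul (slice cηu ω₀))),
      intervalIntegral.integral_sub (intg _ (continuous_const.fun_mul ((slice cφu ω₀).fun_mul
        (slice cηu ω₀)))) (intg _ (((slice cφu ω₀).fun_pow 3).fun_mul (slice cηu ω₀))),
      intervalIntegral.integral_const_mul]
  -- derivatives of the ω ↦ ∫ φ⁴ and ω ↦ ∫ φ⁶
  have D4 : deriv (fun ω => ∫ x in (0:ℝ)..L, (φ ω x) ^ 4) ω₀
      = 4 * ∫ x in (0:ℝ)..L, φ ω₀ x ^ 3 * η ω₀ x := by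
    have h := hasDerivAt_intervalIntegral_param (a := 0) (b := L)
      (G := fun ω x => (φ ω x) ^ 4) (G' := fun ω x => 4 * φ ω x ^ 3 * η ω x)
      (cφu.fun_pow 4) ((continuous_const.fun_mul (cφu.fun_pow 3)).fun_mul cηu)
      (fun ω x => by simpa using ((hη ω x).fun_pow 4)) ω₀
    rw [h.deriv, ← e4]
  have D6 : deriv (fun ω => ∫ x in (0:ℝ)..L, (φ ω x) ^ 6) ω₀
      = 6 * ∫ x in (0:ℝ)..L, φ ω₀ x ^ 5 * η ω₀ x := by
    have h := hasDerivAt_intervalIntegral_param (a := 0) (b := L)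
      (G := fun ω x => (φ ω x) ^ 6) (G' := fun ω x => 6 * φ ω x ^ 5 * η ω x)
      (cφu.fun_pow 6) ((continuous_const.fun_mul (cφu.fun_pow 5)).fun_mul cηu)
      (fun ω x => by simpa using ((hη ω x).fun_pow 6)) ω₀
    rw [h.deriv, ← e5]
  rw [D4, D6]
  rw [e1, e3, e4, e5, parts2, eξ] at hEzero
  linarith [hEzero]
end

section
/- Suppose φ is a smooth, strictly positive L-periodic solution of -φ'' + ωφ - φ³ - φ⁵ = 0 with quadrature form (φ')² = -φ⁶/3 - φ⁴/2 + ωφ² + B. Then (1/2)∫₀^L φ² dx + (2/3)∫₀^L φ⁴ dx + B∫₀^L φ⁻² dx = 0. -/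
open intervalIntegral

/-- Dividing the quadrature form by φ² and integrating over a period:
(1/2)∫φ² + (2/3)∫φ⁴ + B∫φ⁻² = 0. -/
theorem integral_identity_inv_sq (L ω B : ℝ) (hL : 0 < L) (φ : ℝ → ℝ)
    (hφ : ContDiff ℝ (⊤ : ℕ∞) φ)
    (hpos : ∀ x, 0 < φ x)
    (hper : ∀ x, φ (x + L) = φ x)
    (hode : ∀ x, -(deriv (deriv φ) x) + ω * φ x - (φ x) ^ 3 - (φ x) ^ 5 = 0)
    (hquad : ∀ x, (deriv φ x) ^ 2 =
      -(φ x) ^ 6 / 3 - (φ x) ^ 4 / 2 + ω * (φ x) ^ 2 + B) :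
    (1 / 2) * (∫ x in (0 : ℝ)..L, (φ x) ^ 2)
      + (2 / 3) * (∫ x in (0 : ℝ)..L, (φ x) ^ 4)
      + B * (∫ x in (0 : ℝ)..L, (φ x) ^ (-2 : ℤ)) = 0 := by
  have hφi : ContDiff ℝ ((⊤:ℕ∞) : WithTop ℕ∞) φ := hφ.of_le (by simp)
  have hφ' : ContDiff ℝ ((⊤:ℕ∞) : WithTop ℕ∞) (deriv φ) := (contDiff_infty_iff_deriv.mp hφi).2
  have hcont : Continuous φ := hφ.continuous
  have hne : ∀ x, φ x ≠ 0 := fun x => (hpos x).ne'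
  -- g = φ'/φ
  set g : ℝ → ℝ := fun x => deriv φ x / φ x with hg
  set F : ℝ → ℝ := fun x => -((1/2) * (φ x)^2 + (2/3) * (φ x)^4 + B * ((φ x)^2)⁻¹)
    with hF
  have hder : ∀ x ∈ Set.uIcc (0:ℝ) L, HasDerivAt g (F x) x := by
    intro x _
    have h1 : HasDerivAt (deriv φ) (deriv (deriv φ) x) x :=
      (hφ'.differentiable (by norm_num) x).hasDerivAt
    have h2 : HasDerivAt φ (deriv φ x) x := (hφi.differentiable (by norm_num) x).hasDerivAt
    have := h1.div h2 (hne x)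
    refine this.congr_deriv ?_
    symm
    have hode' : deriv (deriv φ) x = ω * φ x - (φ x) ^ 3 - (φ x) ^ 5 := by
      have := hode x; linarith
    rw [hode', show deriv φ x * deriv φ x = deriv φ x ^ 2 from (sq _).symm,
      hquad x, hF]
    rw [eq_div_iff (pow_ne_zero 2 (hne x))]
    field_simp [hne x]
    ring
  have hFcont : Continuous F := by
    apply Continuous.neg
    apply Continuous.add
    · exact ((continuous_const.mul (hcont.pow 2))).add
        (continuous_const.mul (hcont.pow 4))
    · exact continuous_const.mul ((hcont.pow 2).inv₀ (fun x => pow_ne_zero 2 (hne x)))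
  have hint : IntervalIntegrable F MeasureTheory.volume 0 L :=
    hFcont.intervalIntegrable 0 L
  have key : ∫ x in (0:ℝ)..L, F x = g L - g 0 :=
    intervalIntegral.integral_eq_sub_of_hasDerivAt hder hint
  -- periodicity: g L = g 0
  have hperD : ∀ x, deriv φ (x + L) = deriv φ x := by
    intro x
    have : (fun y => φ (y + L)) = φ := funext hper
    calc deriv φ (x + L) = deriv (fun y => φ (y + L)) x := (deriv_comp_add_const ..).symm
      _ = deriv φ x := by rw [this]
  have hgper : g L = g 0 := by
    have h1 : φ L = φ 0 := by simpa using hper 0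
    have h2 : deriv φ L = deriv φ 0 := by simpa using hperD 0
    simp [hg, h1, h2]
  rw [hgper, sub_self] at key
  -- now expand the integral of F
  have i2 : IntervalIntegrable (fun x => (φ x)^2) MeasureTheory.volume 0 L :=
    (hcont.pow 2).intervalIntegrable 0 L
  have i4 : IntervalIntegrable (fun x => (φ x)^4) MeasureTheory.volume 0 L :=
    (hcont.pow 4).intervalIntegrable 0 L
  have iinv : IntervalIntegrable (fun x => ((φ x)^2)⁻¹) MeasureTheory.volume 0 L :=
    ((hcont.pow 2).inv₀ (fun x => pow_ne_zero 2 (hne x))).intervalIntegrable 0 L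
  have expand : ∫ x in (0:ℝ)..L, F x
      = -((1/2) * (∫ x in (0:ℝ)..L, (φ x)^2)
        + (2/3) * (∫ x in (0:ℝ)..L, (φ x)^4)
        + B * (∫ x in (0:ℝ)..L, ((φ x)^2)⁻¹)) := by
    rw [hF]
    rw [intervalIntegral.integral_neg]
    rw [intervalIntegral.integral_add ((i2.const_mul _).add (i4.const_mul _))
      (iinv.const_mul _)]
    rw [intervalIntegral.integral_add (i2.const_mul _) (i4.const_mul _)]
    rw [intervalIntegral.integral_const_mul, intervalIntegral.integral_const_mul,
      intervalIntegral.integral_const_mul]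
  have hzpow : (∫ x in (0:ℝ)..L, (φ x) ^ (-2 : ℤ)) = ∫ x in (0:ℝ)..L, ((φ x)^2)⁻¹ := by
    apply intervalIntegral.integral_congr
    intro x _
    show φ x ^ (-2:ℤ) = (φ x ^ 2)⁻¹
    rw [zpow_neg]
    norm_cast
  rw [hzpow]
  rw [expand] at key
  linarith
end
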